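/- Fix a bound β ≥ 1 and let θ be of bounded type with all partial quotients at most β, with l_n := |p_n - q_n θ|. Let v ∈ ℝ/ℤ, let J be an arc of length λ·l_n (for λ ≥ 1), and let O := { y ∈ J : y = v - iθ (mod 1) for some 0 ≤ i ≤ q_{n+m} - 1 }. Then |O| ≤ λ C^m + 1 for a constant C > 1 depending only on β; in particular |O| = O(λ C^m). -/

import Mathlib

/-!
Lift `J` to the interval `[0, λ l_n] ⊂ ℝ`. The lifts of two distinct points `v - iθ`, `v - jθ`
of `O` differ by `(j - i)θ - z` for some integer `z`, where `0 < |j - i| < q_{n+m}`; by the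
best approximation property of the convergents this is at least `l_{n+m}` in absolute value.
So `O` is `l_{n+m}`-separated inside an interval of length `λ l_n` and has at most
`λ l_n / l_{n+m} + 1` points. Finally `l_n = t_0 ⋯ t_n` for the Gauss map iterates `t_k`, and
`t_k⁻¹ = a_{k+1} + t_{k+1} ≤ β + 1`, whence `l_n ≤ (β + 1)^m l_{n+m}` and `C = β + 1` works.
-/

/-- Data of the continued fraction expansion `θ = [0; a 1, a 2, ...]` of an irrational
`θ ∈ (0,1)` (encoded via the Gauss map iterates `t n`), together with the convergents
`p n / q n` produced by the standard recursion
`p n = a n * p (n-1) + p (n-2)`, `q n = a n * q (n-1) + q (n-2)`,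
with `p 0 = 0`, `q 0 = 1`, and (`p (-1) = 1`, `q (-1) = 0`, folded into the values at `1`). -/
structure CFData (θ : ℝ) : Type where
  /-- the partial quotients `a 1, a 2, ...` (the value `a 0` is unused) -/
  a : ℕ → ℕ
  /-- the Gauss map iterates: `t 0 = θ`, `t (n+1) = (t n)⁻¹ - a (n+1)` -/
  t : ℕ → ℝ
  t_zero : t 0 = θ
  t_mem : ∀ n, t n ∈ Set.Ioo (0 : ℝ) 1
  a_floor : ∀ n, (a (n + 1) : ℤ) = ⌊(t n)⁻¹⌋
  t_succ : ∀ n, t (n + 1) = (t n)⁻¹ - (a (n + 1) : ℝ)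
  /-- numerators of the convergents -/
  p : ℕ → ℕ
  /-- denominators of the convergents -/
  q : ℕ → ℕ
  p_zero : p 0 = 0
  p_one : p 1 = 1
  q_zero : q 0 = 1
  q_one : q 1 = a 1
  p_rec : ∀ n, p (n + 2) = a (n + 2) * p (n + 1) + p n
  q_rec : ∀ n, q (n + 2) = a (n + 2) * q (n + 1) + q n

/-- `l n = |p n - q n · θ|`. -/
noncomputable def CFData.l {θ : ℝ} (cf : CFData θ) (n : ℕ) : ℝ :=
  |(cf.p n : ℝ) - (cf.q n : ℝ) * θ|

theorem Set.ncard_le_div_add_one_of_separated {α : Type*} {S : Set α} {u : α → ℝ} {a b s : ℝ}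
    (hs : 0 < s) (hab : a ≤ b) (hu : ∀ x ∈ S, u x ∈ Set.Icc a b)
    (hsep : ∀ x ∈ S, ∀ y ∈ S, x ≠ y → s ≤ |u x - u y|) :
    (S.ncard : ℝ) ≤ (b - a) / s + 1 := by
  set g : α → ℤ := fun x => ⌊(u x - a) / s⌋
  have hg_inj : S.InjOn g := by
    intro x hx y hy hxy
    by_contra hne
    have h := Int.abs_sub_lt_one_of_floor_eq_floor hxy
    rw [← sub_div, sub_sub_sub_cancel_right, abs_div, abs_of_pos hs, div_lt_one hs] at h
    exact (hsep x hx y hy hne).not_gt h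
  have hg_maps : ∀ x ∈ S, g x ∈ (Finset.Icc 0 ⌊(b - a) / s⌋ : Set ℤ) := by
    intro x hx
    obtain ⟨hax, hxb⟩ := hu x hx
    rw [Finset.coe_Icc, Set.mem_Icc]
    exact ⟨Int.floor_nonneg.2 (div_nonneg (sub_nonneg.2 hax) hs.le),
      Int.floor_le_floor (by gcongr)⟩
  have hfloor : 0 ≤ ⌊(b - a) / s⌋ := Int.floor_nonneg.2 (div_nonneg (sub_nonneg.2 hab) hs.le)
  calc (S.ncard : ℝ) ≤ (Finset.Icc 0 ⌊(b - a) / s⌋).card := by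
        exact_mod_cast (Set.ncard_le_ncard_of_injOn g hg_maps hg_inj).trans_eq
          (Set.ncard_coe_finset _)
    _ = ⌊(b - a) / s⌋ + 1 := by
        rw [Int.card_Icc, sub_zero, ← Int.cast_natCast, Int.toNat_of_nonneg (by omega)]
        push_cast; ring
    _ ≤ (b - a) / s + 1 := by gcongr; exact Int.floor_le _

theorem AddCircle.ncard_le_div_add_one_of_separated {p L s : ℝ} {O : Set (AddCircle p)}
    {w : AddCircle p} (hs : 0 < s) (hL : 0 ≤ L)
    (hO : O ⊆ (fun u : ℝ => w + (u : AddCircle p)) '' Set.Icc 0 L)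
    (hsep : ∀ y ∈ O, ∀ y' ∈ O, y ≠ y' → ∀ d : ℝ, (d : AddCircle p) = y - y' → s ≤ |d|) :
    (O.ncard : ℝ) ≤ L / s + 1 := by
  choose! u hu hwu using fun y (hy : y ∈ O) => hO hy
  simpa using Set.ncard_le_div_add_one_of_separated hs hL hu fun y hy y' hy' hne =>
    hsep y hy y' hy' hne _ (by
      have hy_eq : w + (u y : AddCircle p) = y := hwu y hy
      have hy'_eq : w + (u y' : AddCircle p) = y' := hwu y' hy'
      rw [AddCircle.coe_sub]
      conv_rhs => rw [← hy_eq, ← hy'_eq]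
      abel)

namespace CFData

open Finset
variable {θ : ℝ} (cf : CFData θ)

theorem q_mul_sub_p_eq (n : ℕ) :
    (cf.q n : ℝ) * θ - cf.p n = (-1) ^ n * ∏ k ∈ range (n + 1), cf.t k := by
  induction n using Nat.twoStepInduction with
  | zero => simp [cf.p_zero, cf.q_zero, cf.t_zero]
  | one =>
    have hθ : θ ≠ 0 := cf.t_zero ▸ (cf.t_mem 0).1.ne'
    rw [cf.p_one, cf.q_one, prod_range_succ, prod_range_one, cf.t_succ, cf.t_zero]
    field_simp
    ring
  | more n ih ih' =>
    have hstep : cf.t (n + 1) * cf.t (n + 2) = 1 - cf.a (n + 2) * cf.t (n + 1) := by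
      rw [cf.t_succ (n + 1)]
      field_simp [(cf.t_mem (n + 1)).1.ne']
    rw [cf.p_rec, cf.q_rec, prod_range_succ, prod_range_succ]
    rw [prod_range_succ] at ih'
    push_cast
    linear_combination (cf.a (n + 2) : ℝ) * ih' + ih +
      (-1) ^ (n + 1) * (∏ k ∈ range (n + 1), cf.t k) * hstep

theorem l_eq_prod (n : ℕ) : cf.l n = ∏ k ∈ range (n + 1), cf.t k := by
  rw [l, abs_sub_comm, q_mul_sub_p_eq, abs_mul, abs_neg_one_pow, one_mul,
    abs_of_pos (prod_pos fun k _ => (cf.t_mem k).1)]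

theorem l_pos (n : ℕ) : 0 < cf.l n := by
  rw [l_eq_prod]
  exact prod_pos fun k _ => (cf.t_mem k).1

theorem q_mul_sub_p_eq_l (n : ℕ) : (cf.q n : ℝ) * θ - cf.p n = (-1) ^ n * cf.l n := by
  rw [q_mul_sub_p_eq, l_eq_prod]

theorem l_succ (n : ℕ) : cf.l (n + 1) = cf.l n * cf.t (n + 1) := by
  rw [l_eq_prod, l_eq_prod, prod_range_succ]

theorem l_succ_le (n : ℕ) : cf.l (n + 1) ≤ cf.l n := by
  rw [l_succ]
  exact mul_le_of_le_one_right (cf.l_pos n).le (cf.t_mem (n + 1)).2.le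

theorem l_le_mul_l_succ {β : ℕ} (hb : ∀ i, 1 ≤ i → cf.a i ≤ β) (n : ℕ) :
    cf.l n ≤ (β + 1) * cf.l (n + 1) := by
  have ht := (cf.t_mem (n + 1)).1
  have hinv : (cf.t (n + 1))⁻¹ ≤ β + 1 := by
    have ha : (cf.a (n + 2) : ℝ) ≤ β := by exact_mod_cast hb (n + 2) (by omega)
    linarith [cf.t_succ (n + 1), (cf.t_mem (n + 2)).2]
  calc cf.l n = (cf.t (n + 1))⁻¹ * cf.l (n + 1) := by
        rw [l_succ]; field_simp
    _ ≤ (β + 1) * cf.l (n + 1) := by gcongr; exact (cf.l_pos _).le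

theorem l_le_pow_mul_l_add {β : ℕ} (hb : ∀ i, 1 ≤ i → cf.a i ≤ β) (n m : ℕ) :
    cf.l n ≤ (β + 1) ^ m * cf.l (n + m) := by
  induction m with
  | zero => simp
  | succ m ih =>
    calc cf.l n ≤ (β + 1) ^ m * cf.l (n + m) := ih
      _ ≤ (β + 1) ^ m * ((β + 1) * cf.l (n + m + 1)) := by
          gcongr; exact cf.l_le_mul_l_succ hb _
      _ = (β + 1) ^ (m + 1) * cf.l (n + (m + 1)) := by rw [← add_assoc]; ring

theorem p_mul_q_sub_p_mul_q (n : ℕ) :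
    (cf.p (n + 1) : ℤ) * cf.q n - cf.p n * cf.q (n + 1) = (-1) ^ n := by
  induction n with
  | zero => simp [cf.p_zero, cf.p_one, cf.q_zero]
  | succ n ih =>
    rw [cf.p_rec, cf.q_rec]
    push_cast
    linear_combination (-1 : ℤ) * ih

-- `[[q N, q (N+1)], [p N, p (N+1)]]` has determinant `±1`, so it is invertible over `ℤ`.
theorem exists_int_comb (N : ℕ) (k z : ℤ) :
    ∃ x y : ℤ, k = x * cf.q N + y * cf.q (N + 1) ∧ z = x * cf.p N + y * cf.p (N + 1) := by
  have hdet := cf.p_mul_q_sub_p_mul_q N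
  have hsq : ((-1 : ℤ) ^ N) ^ 2 = 1 := by rw [← pow_mul, pow_mul', neg_one_sq, one_pow]
  refine ⟨(-1) ^ N * (k * cf.p (N + 1) - z * cf.q (N + 1)),
    (-1) ^ N * (z * cf.q N - k * cf.p N), ?_, ?_⟩
  · linear_combination (-k * (-1) ^ N) * hdet - k * hsq
  · linear_combination (-z * (-1) ^ N) * hdet - z * hsq

/-- Best approximation property of the convergents. -/
theorem l_le_abs_mul_sub_of_lt_q_succ (N : ℕ) {k : ℤ} (z : ℤ) (hk : 0 < k)
    (hk' : k < cf.q (N + 1)) : cf.l N ≤ |k * θ - z| := by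
  obtain ⟨x, y, rfl, rfl⟩ := cf.exists_int_comb N k z
  have hq : (0 : ℤ) ≤ cf.q N := by positivity
  have hx : x ≠ 0 := by
    rintro rfl
    rcases le_or_gt y 0 with hy | hy <;> nlinarith
  have hxy : x * y ≤ 0 := by
    rcases le_or_gt x 0 with hx' | hx' <;> rcases le_or_gt y 0 with hy | hy <;> nlinarith
  set A : ℝ := x * ((-1) ^ N * cf.l N)
  set B : ℝ := y * ((-1) ^ (N + 1) * cf.l (N + 1))
  have hsplit : ((x * cf.q N + y * cf.q (N + 1) : ℤ) : ℝ) * θ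
      - ((x * cf.p N + y * cf.p (N + 1) : ℤ) : ℝ) = A + B := by
    push_cast
    linear_combination (x : ℝ) * cf.q_mul_sub_p_eq_l N + (y : ℝ) * cf.q_mul_sub_p_eq_l (N + 1)
  -- `x y ≤ 0` while the errors `q θ - p` of consecutive convergents alternate in sign
  have hAB : 0 ≤ A * B := by
    have hxyR : ((x * y : ℤ) : ℝ) ≤ 0 := by exact_mod_cast hxy
    have h : A * B = -((x * y : ℤ) : ℝ) * (cf.l N * cf.l (N + 1)) * ((-1) ^ N) ^ 2 := by
      push_cast; ring
    rw [h, ← pow_mul, pow_mul', neg_one_sq, one_pow, mul_one]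
    exact mul_nonneg (neg_nonneg.2 hxyR) (mul_pos (cf.l_pos N) (cf.l_pos (N + 1))).le
  have hxabs : (1 : ℝ) ≤ |(x : ℝ)| := by exact_mod_cast Int.one_le_abs hx
  rw [hsplit, abs_add_eq_add_abs_iff _ _ |>.2 (mul_nonneg_iff.1 hAB)]
  calc cf.l N ≤ |(x : ℝ)| * cf.l N := le_mul_of_one_le_left (cf.l_pos N).le hxabs
    _ = |A| := by rw [abs_mul, abs_mul, abs_neg_one_pow, one_mul, abs_of_pos (cf.l_pos N)]
    _ ≤ |A| + |B| := le_add_of_nonneg_right (abs_nonneg B)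

theorem l_le_abs_mul_sub (N : ℕ) {k : ℤ} (z : ℤ) (hk : k ≠ 0) (hk' : |k| < cf.q N) :
    cf.l N ≤ |k * θ - z| := by
  cases N with
  | zero =>
    rw [cf.q_zero, Nat.cast_one, Int.abs_lt_one_iff] at hk'
    exact absurd hk' hk
  | succ N =>
    refine (cf.l_succ_le N).trans ?_
    rcases hk.lt_or_gt with hneg | hpos
    · have h := cf.l_le_abs_mul_sub_of_lt_q_succ N (-z) (neg_pos.2 hneg)
        (by rwa [abs_of_neg hneg] at hk')
      rwa [Int.cast_neg, Int.cast_neg, neg_mul, neg_sub_neg, abs_sub_comm] at h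
    · exact cf.l_le_abs_mul_sub_of_lt_q_succ N z hpos (by rwa [abs_of_pos hpos] at hk')

theorem l_le_abs_of_coe_eq (N : ℕ) {k : ℤ} (hk : k ≠ 0) (hk' : |k| < cf.q N) {d : ℝ}
    (hd : (d : AddCircle (1 : ℝ)) = ((k * θ : ℝ) : AddCircle (1 : ℝ))) : cf.l N ≤ |d| := by
  obtain ⟨z, hz⟩ := (AddCircle.coe_eq_zero_iff (1 : ℝ)).1
    (by rw [AddCircle.coe_sub, hd, sub_self] : ((d - k * θ : ℝ) : AddCircle (1 : ℝ)) = 0)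
  have hdz : d = k * θ - ((-z : ℤ) : ℝ) := by
    rw [zsmul_one] at hz
    push_cast
    linarith
  rw [hdz]
  exact cf.l_le_abs_mul_sub N (-z) hk hk'

end CFData

/-- **Counting backward orbit points in an arc.** Fix `β ≥ 1`. There is a constant `C > 1`
depending only on `β` such that for every irrational `θ` of bounded type with all partial
quotients at most `β`, every `v, w ∈ ℝ/ℤ`, all `n, m`, every `λ ≥ 1` and the arc
`J` of length `λ · l n` starting at `w`, the set
`O = { y ∈ J : y = v - i θ for some 0 ≤ i ≤ q (n+m) - 1 }` has at most `λ C^m + 1` elements. -/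
theorem backward_orbit_count (β : ℕ) (hβ : 1 ≤ β) :
    ∃ C : ℝ, 1 < C ∧
      ∀ (θ : ℝ), Irrational θ → ∀ (cf : CFData θ), (∀ i, 1 ≤ i → cf.a i ≤ β) →
        ∀ (v w : AddCircle (1 : ℝ)) (n m : ℕ) (lam : ℝ), 1 ≤ lam →
          ∀ J O : Set (AddCircle (1 : ℝ)),
            J = (fun u : ℝ => w + (u : AddCircle (1 : ℝ))) '' Set.Icc 0 (lam * cf.l n) →
            O = {y | y ∈ J ∧ ∃ i < cf.q (n + m),
                  y = v - (((i : ℝ) * θ : ℝ) : AddCircle (1 : ℝ))} →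
            (O.ncard : ℝ) ≤ lam * C ^ m + 1 := by
  refine ⟨β + 1, by norm_cast; omega, ?_⟩
  rintro θ - cf hb v w n m lam hlam J O rfl hO
  have hl := cf.l_pos (n + m)
  have hsep : ∀ y ∈ O, ∀ y' ∈ O, y ≠ y' → ∀ d : ℝ, (d : AddCircle (1 : ℝ)) = y - y' →
      cf.l (n + m) ≤ |d| := by
    rw [hO]
    rintro _ ⟨-, i, hi, rfl⟩ _ ⟨-, j, hj, rfl⟩ hne d hd
    refine cf.l_le_abs_of_coe_eq (n + m) (k := j - i) ?_ ?_ ?_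
    · intro h
      obtain rfl : i = j := by omega
      exact hne rfl
    · rw [abs_sub_lt_iff]; omega
    · rw [hd]; push_cast; rw [sub_mul, AddCircle.coe_sub]; abel
  calc (O.ncard : ℝ) ≤ lam * cf.l n / cf.l (n + m) + 1 :=
        AddCircle.ncard_le_div_add_one_of_separated hl
          (mul_nonneg (by linarith) (cf.l_pos n).le) (hO.subset.trans fun _ hy => hy.1) hsep
    _ ≤ lam * (β + 1) ^ m + 1 := by
        gcongr
        rw [div_le_iff₀ hl, mul_assoc]
        gcongr
        exact cf.l_le_pow_mul_l_add hb n m
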